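/- arXiv:2407.02326 — 3 statements merged into one kernel-verified Lean document; each statement's English description precedes it below -/
import Mathlib

section
/- Every finite description linear order is order-isomorphic to the linguage 𝐋(M) of some deterministic finite automaton M over the alphabet {0,1}. -/
/-- A deterministic finite automaton with a partial transition function. -/
structure PDFA (σ : Type) where
  /-- the (finite) set of states -/
  State : Type
  finState : Finite State
  /-- the start state -/
  start : State
  /-- the set of accept states -/
  accept : Set State
  /-- the partial transition function -/
  step : State → σ → Option State

namespace PDFA

variable {σ : Type} (M : PDFA σ)

/-- The extended (partial) transition function `δ̂`, reading the word left to right. -/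
def run (q : M.State) (w : List σ) : Option M.State :=
  w.foldlM (fun q a => M.step q a) q

/-- The language accepted by the automaton. -/
def lang : Set (List σ) := {w | ∃ q ∈ M.accept, M.run M.start w = some q}

end PDFA

/-- The inorder relation `<₂` on finite binary words: `x <₂ y` iff, writing
`x = w·x'`, `y = w·y'` with `w` the longest common prefix, either `x'` begins
with `0`(=`false`) or `y'` begins with `1`(=`true`). -/
def inlt : List Bool → List Bool → Prop
  | [], [] => False
  | [], b :: _ => b = true
  | a :: _, [] => a = false
  | a :: x, b :: y => (a = false ∧ b = true) ∨ (a = b ∧ inlt x y)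

/-- The class of finite description linear orders, as a predicate on pairs
`(L, r)` of a type and a binary relation: the smallest class containing the
empty and one-element orders and closed under order isomorphism, binary sums,
multiplication by `ω`, multiplication by `ω*`, and finitary shuffles. -/
inductive FinDesc : (L : Type) → (L → L → Prop) → Prop
  | empty : FinDesc Empty (fun _ _ => False)
  | single : FinDesc PUnit (fun _ _ => False)
  | iso (L : Type) (r : L → L → Prop) (L' : Type) (r' : L' → L' → Prop) :
      FinDesc L r → Nonempty (r' ≃r r) → FinDesc L' r'
  | sum (L₀ : Type) (r₀ : L₀ → L₀ → Prop) (L₁ : Type) (r₁ : L₁ → L₁ → Prop) :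
      FinDesc L₀ r₀ → FinDesc L₁ r₁ → FinDesc (L₀ ⊕ L₁) (Sum.Lex r₀ r₁)
  | omegaMul (L : Type) (r : L → L → Prop) :
      FinDesc L r → FinDesc (ℕ × L) (Prod.Lex (· < ·) r)
  | omegaStarMul (L : Type) (r : L → L → Prop) :
      FinDesc L r → FinDesc (ℕ × L) (Prod.Lex (fun m n : ℕ => n < m) r)
  | shuffle (n : ℕ) (hn : 1 ≤ n) (L : Fin n → Type) (r : ∀ i, L i → L i → Prop)
      (χ : ℚ → Fin n)
      (hχ : ∀ i, ∀ a b : ℚ, a < b → ∃ q, a < q ∧ q < b ∧ χ q = i) :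
      (∀ i, FinDesc (L i) (r i)) →
      FinDesc ((q : ℚ) × L (χ q)) (Sigma.Lex (· < ·) (fun q => r (χ q)))

/-!
Reading a binary word `w` as the dyadic number `0.w1` turns `<₂` into the order of `ℚ`, so every
linguage is a strict linear order.

All closure steps are instances of one gluing construction. A *parser* is a finite automaton that
may stop on a transition and hand over to one of finitely many automata `M k`. Its exit words form
a prefix-free set, and `<₂` compares `u ++ v` with `u' ++ v'` as it compares `u` with `u'` when
these are distinct exit words. Hence if the exit words, ordered by `<₂`, are indexed by an order
`ι` and the exit at index `i` hands over to `M (col i)`, the glued automaton has linguage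
`Σ_{i ∈ ι} 𝐋(M (col i))`. Sums use the exit words `0`, `1`; `· ω` and `· ω*` use `1ᵏ0` and `0ᵏ1`.
For the `n`-ary shuffle, the exit words spell finite sequences of letters `v ∈ [0, 2n] \ {n}` as
blocks `1ᵛ0`, terminated by `1ⁿ0`; the colour of a sequence is that of its last letter
(`v` or `v - n - 1`). These sequences form a countable dense order without endpoints in which
each colour is dense, so a coloured back-and-forth argument identifies them with `(ℚ, χ)`.
-/

def binVal : List Bool → ℚ
  | [] => 1 / 2
  | false :: w => binVal w / 2
  | true :: w => (1 + binVal w) / 2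

lemma binVal_mem_Ioo : ∀ w, binVal w ∈ Set.Ioo 0 1
  | [] => by norm_num [binVal]
  | b :: w => by
    obtain ⟨h₀, h₁⟩ := binVal_mem_Ioo w
    cases b <;> constructor <;> simp only [binVal] <;> linarith

theorem inlt_iff_binVal_lt : ∀ {x y : List Bool}, inlt x y ↔ binVal x < binVal y
  | [], [] => by simp [inlt]
  | [], b :: y => by
    obtain ⟨h₀, h₁⟩ := binVal_mem_Ioo y
    cases b <;> simp only [inlt, binVal] <;> constructor <;> intro h <;> first | trivial | linarith
  | a :: x, [] => by
    obtain ⟨h₀, h₁⟩ := binVal_mem_Ioo x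
    cases a <;> simp only [inlt, binVal] <;> constructor <;> intro h <;> first | trivial | linarith
  | a :: x, b :: y => by
    have ih := @inlt_iff_binVal_lt x y
    obtain ⟨h₀, h₁⟩ := binVal_mem_Ioo x
    obtain ⟨h₂, h₃⟩ := binVal_mem_Ioo y
    cases a <;> cases b <;> simp only [inlt, binVal, ih] <;> constructor <;> intro h <;>
      simp_all <;> linarith

theorem binVal_injective : Function.Injective binVal := by
  intro x
  induction x with
  | nil =>
    rintro (_ | ⟨b, y⟩) h
    · rfl
    · obtain ⟨h₀, h₁⟩ := binVal_mem_Ioo y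
      cases b <;> simp only [binVal] at h <;> linarith
  | cons a x ih =>
    rintro (_ | ⟨b, y⟩) h
    · obtain ⟨h₀, h₁⟩ := binVal_mem_Ioo x
      cases a <;> simp only [binVal] at h <;> linarith
    · obtain ⟨h₀, h₁⟩ := binVal_mem_Ioo x
      obtain ⟨h₂, h₃⟩ := binVal_mem_Ioo y
      cases a <;> cases b <;> simp only [binVal] at h
      all_goals first | linarith | rw [ih (by linarith)]

lemma inlt_irrefl (x : List Bool) : ¬ inlt x x := by simp [inlt_iff_binVal_lt]

lemma inlt_asymm {x y : List Bool} (h : inlt x y) : ¬ inlt y x := by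
  rw [inlt_iff_binVal_lt] at *; exact h.not_gt

lemma inlt_append_left_iff (x u v : List Bool) : inlt (x ++ u) (x ++ v) ↔ inlt u v := by
  induction x with
  | nil => rfl
  | cons a x ih => cases a <;> simp [inlt, ih]

lemma inlt_append_of_not_prefix {x y : List Bool} (hxy : ¬ x <+: y) (hyx : ¬ y <+: x)
    (u v : List Bool) : inlt (x ++ u) (y ++ v) ↔ inlt x y := by
  induction x generalizing y with
  | nil => exact absurd List.nil_prefix hxy
  | cons a x ih =>
    cases y with
    | nil => exact absurd List.nil_prefix hyx
    | cons b y =>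
      obtain rfl | hab := eq_or_ne a b
      · simp only [List.cons_prefix_cons, true_and] at hxy hyx
        simp [inlt, ih hxy hyx]
      · cases a <;> cases b <;> simp_all [inlt]

def block (b : Bool) (k : ℕ) : List Bool := List.replicate k b ++ [!b]

lemma block_append_eq (b : Bool) {j k : ℕ} (h : j < k) (v : List Bool) :
    block b k ++ v = List.replicate j b ++ b :: (List.replicate (k - j - 1) b ++ (!b) :: v) := by
  obtain ⟨d, rfl⟩ := Nat.exists_eq_add_of_lt h
  rw [show j + d + 1 - j - 1 = d by omega, show j + d + 1 = j + (d + 1) by omega, block,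
    List.replicate_add, List.replicate_succ]
  simp

lemma inlt_block_true_append {j k : ℕ} (h : j < k) (u v : List Bool) :
    inlt (block true j ++ u) (block true k ++ v) := by
  rw [block_append_eq true h, block, List.append_assoc, inlt_append_left_iff]
  simp [inlt]

lemma inlt_block_false_append {j k : ℕ} (h : j < k) (u v : List Bool) :
    inlt (block false k ++ v) (block false j ++ u) := by
  rw [block_append_eq false h, block, List.append_assoc, inlt_append_left_iff]
  simp [inlt]

lemma inlt_block_true_append_iff {j k : ℕ} (hjk : j ≠ k) (u v : List Bool) :
    inlt (block true j ++ u) (block true k ++ v) ↔ j < k := by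
  rcases hjk.lt_or_gt with h | h
  · exact iff_of_true (inlt_block_true_append h u v) h
  · exact iff_of_false (inlt_asymm (inlt_block_true_append h v u)) h.not_gt

lemma block_true_append_inj {j k : ℕ} {u v : List Bool}
    (h : block true j ++ u = block true k ++ v) : j = k ∧ u = v := by
  obtain rfl : j = k := by
    by_contra hjk
    rcases Ne.lt_or_gt hjk with hlt | hlt
    · exact inlt_irrefl _ (h ▸ inlt_block_true_append hlt u v)
    · exact inlt_irrefl _ (h ▸ inlt_block_true_append hlt v u)
  exact ⟨rfl, List.append_cancel_left h⟩

lemma PDFA.run_cons {σ : Type} (M : PDFA σ) (q : M.State) (a : σ) (w : List σ) :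
    M.run q (a :: w) = (M.step q a).bind (M.run · w) := rfl

structure Parser (κ : Type) where
  State : Type
  finState : Finite State
  start : State
  step : State → Bool → Option (State ⊕ κ)

namespace Parser

variable {κ : Type} (N : Parser κ)

def ExitsAt : N.State → List Bool → κ → Prop
  | _, [], _ => False
  | q, b :: w, k =>
    match N.step q b with
    | none => False
    | some (.inl q') => ExitsAt q' w k
    | some (.inr k') => w = [] ∧ k' = k

def Exit (u : List Bool) (k : κ) : Prop := N.ExitsAt N.start u k

variable {N} {q : N.State} {b : Bool} {w : List Bool} {k : κ}

lemma exitsAt_cons_of_step_none (h : N.step q b = none) : ¬ N.ExitsAt q (b :: w) k := by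
  simp [ExitsAt, h]

lemma exitsAt_cons_of_step_inl {q' : N.State} (h : N.step q b = some (.inl q')) :
    N.ExitsAt q (b :: w) k ↔ N.ExitsAt q' w k := by
  simp [ExitsAt, h]

lemma exitsAt_cons_of_step_inr {k' : κ} (h : N.step q b = some (.inr k')) :
    N.ExitsAt q (b :: w) k ↔ w = [] ∧ k' = k := by
  simp [ExitsAt, h]

lemma ExitsAt.eq_nil_of_append {u d : List Bool} {k' : κ} (h : N.ExitsAt q u k)
    (h' : N.ExitsAt q (u ++ d) k') : d = [] ∧ k = k' := by
  induction u generalizing q with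
  | nil => exact h.elim
  | cons b u ih =>
    rw [List.cons_append] at h'
    cases hstep : N.step q b with
    | none => exact absurd h (exitsAt_cons_of_step_none hstep)
    | some s =>
      cases s with
      | inl q' =>
        exact ih ((exitsAt_cons_of_step_inl hstep).1 h) ((exitsAt_cons_of_step_inl hstep).1 h')
      | inr k₀ =>
        obtain ⟨rfl, rfl⟩ := (exitsAt_cons_of_step_inr hstep).1 h
        obtain ⟨hd, rfl⟩ := (exitsAt_cons_of_step_inr hstep).1 h'
        exact ⟨List.nil_append d ▸ hd, rfl⟩

end Parser

abbrev Parser.glue {κ : Type} [Finite κ] (N : Parser κ) (M : κ → PDFA Bool) : PDFA Bool where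
  State := N.State ⊕ Σ k, (M k).State
  finState := have := N.finState; have := fun k => (M k).finState; inferInstance
  start := .inl N.start
  accept := {s | s.elim (fun _ => False) fun p => p.2 ∈ (M p.1).accept}
  step
    | .inl q, b => (N.step q b).map (Sum.map id fun k => ⟨k, (M k).start⟩)
    | .inr ⟨k, p⟩, b => ((M k).step p b).map fun p' => .inr ⟨k, p'⟩

namespace Parser

variable {κ : Type} [Finite κ] (N : Parser κ) (M : κ → PDFA Bool)

lemma glue_run_inr (k : κ) (p : (M k).State) (w : List Bool) :
    (N.glue M).run (.inr ⟨k, p⟩) w = ((M k).run p w).map fun p' => .inr ⟨k, p'⟩ := by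
  induction w generalizing p with
  | nil => rfl
  | cons b w ih =>
    rw [PDFA.run_cons, PDFA.run_cons]
    cases h : (M k).step p b with
    | none => simp [glue, h]
    | some p' => simpa [glue, h] using ih p'

lemma accepts_glue_inl_iff (q : N.State) (w : List Bool) :
    (∃ s ∈ (N.glue M).accept, (N.glue M).run (.inl q) w = some s) ↔
      ∃ u k v, w = u ++ v ∧ N.ExitsAt q u k ∧ v ∈ (M k).lang := by
  induction w generalizing q with
  | nil =>
    refine iff_of_false ?_ ?_
    · rintro ⟨s, hs, ⟨⟩⟩
      exact hs
    · rintro ⟨u, k, v, huv, hu, -⟩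
      obtain ⟨rfl, rfl⟩ := List.append_eq_nil_iff.1 huv.symm
      exact hu
  | cons b w ih =>
    have hsplit : (∃ u k v, b :: w = u ++ v ∧ N.ExitsAt q u k ∧ v ∈ (M k).lang) ↔
        ∃ u k v, w = u ++ v ∧ N.ExitsAt q (b :: u) k ∧ v ∈ (M k).lang := by
      constructor
      · rintro ⟨_ | ⟨b', u⟩, k, v, huv, hu, hv⟩
        · exact hu.elim
        · obtain ⟨rfl, rfl⟩ := List.cons_eq_cons.1 huv
          exact ⟨u, k, v, rfl, hu, hv⟩
      · rintro ⟨u, k, v, rfl, hu, hv⟩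
        exact ⟨b :: u, k, v, rfl, hu, hv⟩
    rw [hsplit, PDFA.run_cons]
    simp only [ExitsAt]
    cases hstep : N.step q b with
    | none => simp [glue]
    | some s =>
      cases s with
      | inl q' => simpa [glue] using ih q'
      | inr k =>
        simp only [glue, Option.map_some, Sum.map_inr, Option.bind_some, glue_run_inr]
        simp only [PDFA.lang, Set.mem_ofPred_eq, Option.map_eq_some_iff]
        constructor
        · rintro ⟨_, hs, p, hp, rfl⟩
          exact ⟨[], k, w, rfl, ⟨rfl, rfl⟩, p, hs, hp⟩
        · rintro ⟨_, _, _, rfl, ⟨rfl, rfl⟩, p, hs, hp⟩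
          exact ⟨.inr ⟨_, p⟩, hs, p, hp, rfl⟩

lemma mem_glue_lang (w : List Bool) :
    w ∈ (N.glue M).lang ↔ ∃ u k v, w = u ++ v ∧ N.Exit u k ∧ v ∈ (M k).lang :=
  N.accepts_glue_inl_iff M N.start w

end Parser

def IsLinguage {L : Type} (r : L → L → Prop) : Prop :=
  ∃ M : PDFA Bool, Nonempty (r ≃r fun x y : M.lang => inlt x.1 y.1)

lemma IsLinguage.of_relIso {L L' : Type} {r : L → L → Prop} {r' : L' → L' → Prop}
    (h : IsLinguage r) (e : r' ≃r r) : IsLinguage r' :=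
  let ⟨M, ⟨f⟩⟩ := h; ⟨M, ⟨e.trans f⟩⟩

theorem Parser.isLinguage_sigmaLex {κ : Type} [Finite κ] (N : Parser κ) (M : κ → PDFA Bool)
    {ι : Type} {s : ι → ι → Prop} {t : ι → Type} {tr : ∀ i, t i → t i → Prop}
    (col : ι → κ) (c : ι → List Bool) (hexit : ∀ u k, N.Exit u k ↔ ∃ i, col i = k ∧ c i = u)
    (hc : Function.Injective c) (hs : ∀ i j, s i j ↔ inlt (c i) (c j))
    (e : ∀ i, tr i ≃r fun x y : (M (col i)).lang => inlt x.1 y.1) :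
    IsLinguage (Sigma.Lex s tr) := by
  have hexit_c (i : ι) : N.Exit (c i) (col i) := (hexit _ _).2 ⟨i, rfl, rfl⟩
  have hprefix {i j : ι} (hij : c i <+: c j) : i = j := by
    obtain ⟨d, hd⟩ := hij
    obtain ⟨rfl, -⟩ := (hexit_c i).eq_nil_of_append (hd ▸ hexit_c j)
    exact hc (by simpa using hd)
  let F (p : Σ i, t i) : (N.glue M).lang :=
    ⟨c p.1 ++ (e p.1 p.2).1, (N.mem_glue_lang M _).2 ⟨_, _, _, rfl, hexit_c _, (e _ _).2⟩⟩
  have hF_injective : Function.Injective F := by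
    rintro ⟨i, x⟩ ⟨j, y⟩ hxy
    have hword : c i ++ (e i x).1 = c j ++ (e j y).1 := congrArg Subtype.val hxy
    obtain rfl : i = j := by
      rcases List.prefix_or_prefix_of_prefix (List.prefix_append _ _)
        (hword ▸ List.prefix_append _ _) with h | h
      · exact (hprefix h).symm
      · exact hprefix h
    rw [(e i).injective (Subtype.ext (List.append_cancel_left hword))]
  have hF_surjective : Function.Surjective F := by
    rintro ⟨w, hw⟩
    obtain ⟨_, _, v, rfl, hu, hv⟩ := (N.mem_glue_lang M w).1 hw
    obtain ⟨i, rfl, rfl⟩ := (hexit _ _).1 hu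
    exact ⟨⟨i, (e i).symm ⟨v, hv⟩⟩, by simp [F]⟩
  refine ⟨N.glue M, ⟨⟨Equiv.ofBijective F ⟨hF_injective, hF_surjective⟩, ?_⟩⟩⟩
  rintro ⟨i, x⟩ ⟨j, y⟩
  change inlt (c i ++ (e i x).1) (c j ++ (e j y).1) ↔ _
  rw [Sigma.lex_iff]
  obtain rfl | hij := eq_or_ne i j
  · rw [inlt_append_left_iff, hs, iff_false_intro (inlt_irrefl _), false_or]
    exact (e i).map_rel_iff.trans ⟨fun h => ⟨rfl, h⟩, fun ⟨_, h⟩ => h⟩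
  · rw [inlt_append_of_not_prefix (mt hprefix hij) (mt hprefix hij.symm), ← hs]
    simp [hij]

def emptyPDFA : PDFA Bool where
  State := Unit
  finState := inferInstance
  start := ()
  accept := ∅
  step _ _ := none

def epsilonPDFA : PDFA Bool where
  State := Unit
  finState := inferInstance
  start := ()
  accept := Set.univ
  step _ _ := none

lemma isLinguage_empty : IsLinguage (fun _ _ : Empty => False) := by
  have : IsEmpty emptyPDFA.lang := ⟨fun ⟨_, _, hq, _⟩ => hq⟩
  exact ⟨emptyPDFA, ⟨⟨Equiv.equivOfIsEmpty _ _, fun {a} => a.elim⟩⟩⟩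

lemma mem_epsilonPDFA_lang_iff (w : List Bool) : w ∈ epsilonPDFA.lang ↔ w = [] := by
  refine ⟨?_, fun h => ⟨(), trivial, h ▸ rfl⟩⟩
  rintro ⟨_, -, hw⟩
  cases w
  · rfl
  · simp [PDFA.run_cons, epsilonPDFA] at hw

lemma isLinguage_punit : IsLinguage (fun _ _ : PUnit => False) := by
  have : Unique epsilonPDFA.lang :=
    { default := ⟨[], (mem_epsilonPDFA_lang_iff _).2 rfl⟩
      uniq := fun w => Subtype.ext ((mem_epsilonPDFA_lang_iff _).1 w.2) }
  refine ⟨epsilonPDFA, ⟨⟨Equiv.ofUnique _ _, ?_⟩⟩⟩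
  simpa using inlt_irrefl _

def sumLexRelIsoSigmaLex {L₀ L₁ : Type} (r₀ : L₀ → L₀ → Prop) (r₁ : L₁ → L₁ → Prop) :
    Sum.Lex r₀ r₁ ≃r Sigma.Lex (· < ·)
      (Bool.rec (motive := fun b => cond b L₁ L₀ → cond b L₁ L₀ → Prop) r₀ r₁) where
  toEquiv := Equiv.sumEquivSigmaBool L₀ L₁
  map_rel_iff' := by
    rintro (x | x) (y | y) <;> simp [Equiv.sumEquivSigmaBool, Sigma.lex_iff]

def prodLexRelIsoSigmaLex {ι L : Type} (s : ι → ι → Prop) (r : L → L → Prop) :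
    Prod.Lex s r ≃r Sigma.Lex s fun _ => r where
  toEquiv := (Equiv.sigmaEquivProd ι L).symm
  map_rel_iff' := by
    rintro ⟨i, x⟩ ⟨j, y⟩
    simp [Sigma.lex_iff, Prod.lex_iff]

def sumParser : Parser Bool where
  State := Unit
  finState := inferInstance
  start := ()
  step _ b := some (.inr b)

lemma sumParser_exit_iff (u : List Bool) (k : Bool) : sumParser.Exit u k ↔ u = [k] := by
  rcases u with _ | ⟨b, _ | _⟩ <;> simp [Parser.Exit, Parser.ExitsAt, sumParser]

lemma IsLinguage.sumLex {L₀ L₁ : Type} {r₀ : L₀ → L₀ → Prop} {r₁ : L₁ → L₁ → Prop}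
    (h₀ : IsLinguage r₀) (h₁ : IsLinguage r₁) : IsLinguage (Sum.Lex r₀ r₁) := by
  obtain ⟨M₀, ⟨e₀⟩⟩ := h₀
  obtain ⟨M₁, ⟨e₁⟩⟩ := h₁
  refine (sumParser.isLinguage_sigmaLex (fun b => cond b M₁ M₀) id (fun b => [b])
    (by simp [sumParser_exit_iff, eq_comm]) (fun _ _ => List.singleton_inj.1)
    (by simp [inlt]) (fun b => ?_)).of_relIso (sumLexRelIsoSigmaLex r₀ r₁)
  cases b
  exacts [e₀, e₁]

def loopParser (b : Bool) : Parser Unit where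
  State := Unit
  finState := inferInstance
  start := ()
  step _ d := some (if d = b then .inl () else .inr ())

lemma exists_block_eq_cons_iff (b d : Bool) (w : List Bool) :
    (∃ k, block b k = d :: w) ↔ if d = b then ∃ k, block b k = w else w = [] := by
  constructor
  · rintro ⟨_ | k, hk⟩ <;>
      simp only [block, List.replicate_succ, List.replicate_zero, List.nil_append,
        List.cons_append, List.cons.injEq] at hk
    · obtain ⟨rfl, rfl⟩ := hk
      simp
    · obtain ⟨rfl, rfl⟩ := hk
      exact if_pos rfl ▸ ⟨k, rfl⟩
  · split_ifs with hd
    · rintro ⟨k, rfl⟩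
      exact ⟨k + 1, by simp [block, List.replicate_succ, hd]⟩
    · rintro rfl
      exact ⟨0, by cases b <;> cases d <;> simp_all [block]⟩

lemma loopParser_exit_iff (b : Bool) (u : List Bool) :
    (loopParser b).Exit u () ↔ ∃ k, block b k = u := by
  induction u with
  | nil => simp [Parser.Exit, Parser.ExitsAt, block]
  | cons d w ih =>
    rw [exists_block_eq_cons_iff, ← ih]
    by_cases hd : d = b <;> simp [Parser.Exit, Parser.ExitsAt, loopParser, hd]

lemma IsLinguage.prodLex {L : Type} {r : L → L → Prop} (h : IsLinguage r) (b : Bool)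
    {s : ℕ → ℕ → Prop} (hs : ∀ i j, s i j ↔ inlt (block b i) (block b j)) :
    IsLinguage (Prod.Lex s r) := by
  obtain ⟨M, ⟨e⟩⟩ := h
  have hinj : Function.Injective (block b) := fun i j hij => by
    simpa [block] using congrArg List.length hij
  exact ((loopParser b).isLinguage_sigmaLex (fun _ => M) (fun _ => ()) (block b)
    (fun u () => by simpa using loopParser_exit_iff b u) hinj hs fun _ => e).of_relIso
    (prodLexRelIsoSigmaLex s r)

lemma IsLinguage.omegaMul {L : Type} {r : L → L → Prop} (h : IsLinguage r) :
    IsLinguage (Prod.Lex (· < · : ℕ → ℕ → Prop) r) := by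
  have : StrictMono fun k => binVal (block true k) := fun j k hjk => by
    simpa [← inlt_iff_binVal_lt] using inlt_block_true_append hjk [] []
  exact h.prodLex true fun i j => by rw [inlt_iff_binVal_lt, this.lt_iff_lt]

lemma IsLinguage.omegaStarMul {L : Type} {r : L → L → Prop} (h : IsLinguage r) :
    IsLinguage (Prod.Lex (fun m n : ℕ => n < m) r) := by
  have : StrictAnti fun k => binVal (block false k) := fun j k hjk => by
    simpa [← inlt_iff_binVal_lt] using inlt_block_false_append hjk [] []
  exact h.prodLex false fun i j => by rw [inlt_iff_binVal_lt, this.lt_iff_gt]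

section ColoredBackAndForth

variable {α β κ : Type*} [LinearOrder α] [LinearOrder β]

lemma exists_between_finsets_of_color [NoMinOrder β] [NoMaxOrder β] [Nonempty β]
    {cβ : β → κ} (hβ : ∀ i (a b : β), a < b → ∃ z, a < z ∧ z < b ∧ cβ z = i)
    (lo hi : Finset β) (h : ∀ x ∈ lo, ∀ y ∈ hi, x < y) (i : κ) :
    ∃ m, cβ m = i ∧ (∀ x ∈ lo, x < m) ∧ ∀ y ∈ hi, m < y := by
  have : DenselyOrdered β := ⟨fun a b hab => (hβ i a b hab).imp fun _ h => ⟨h.1, h.2.1⟩⟩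
  obtain ⟨m₁, hlo₁, hhi₁⟩ := Order.exists_between_finsets lo hi h
  obtain ⟨m₀, hlo₀, hm₀⟩ := Order.exists_between_finsets lo {m₁} (by simpa using hlo₁)
  obtain ⟨z, h₀, h₁, hz⟩ := hβ i m₀ m₁ (hm₀ m₁ (Finset.mem_singleton_self _))
  exact ⟨z, hz, fun x hx => (hlo₀ x hx).trans h₀, fun y hy => h₁.trans (hhi₁ y hy)⟩

variable (cα : α → κ) (cβ : β → κ)

def ColoredPartialIso : Type _ :=
  {f : Finset (α × β) //
    (∀ p ∈ f, ∀ q ∈ f, cmp p.1 q.1 = cmp p.2 q.2) ∧ ∀ p ∈ f, cβ p.2 = cα p.1}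

namespace ColoredPartialIso

instance : Preorder (ColoredPartialIso cα cβ) := Subtype.preorder _

instance : Inhabited (ColoredPartialIso cα cβ) := ⟨⟨∅, by simp, by simp⟩⟩

variable {cα cβ}

def comm (f : ColoredPartialIso cα cβ) : ColoredPartialIso cβ cα :=
  ⟨f.1.map (Equiv.prodComm α β).toEmbedding, by
    simp only [Finset.mem_map_equiv]
    exact ⟨fun p hp q hq => (f.2.1 _ hp _ hq).symm, fun p hp => (f.2.2 _ hp).symm⟩⟩

lemma mem_comm_iff (f : ColoredPartialIso cα cβ) (a : α) (b : β) :
    (b, a) ∈ f.comm.1 ↔ (a, b) ∈ f.1 :=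
  Finset.mem_map_equiv

lemma exists_across [NoMinOrder β] [NoMaxOrder β] [Nonempty β]
    (hβ : ∀ i (a b : β), a < b → ∃ z, a < z ∧ z < b ∧ cβ z = i) (f : ColoredPartialIso cα cβ)
    (a : α) : ∃ b, cβ b = cα a ∧ ∀ p ∈ f.1, cmp p.1 a = cmp p.2 b := by
  by_cases h : ∃ b, (a, b) ∈ f.1
  · obtain ⟨b, hb⟩ := h
    exact ⟨b, f.2.2 _ hb, fun p hp => f.2.1 _ hp _ hb⟩
  obtain ⟨b, hb, hlo, hhi⟩ := exists_between_finsets_of_color hβ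
    ({p ∈ f.1 | p.1 < a}.image Prod.snd) ({p ∈ f.1 | a < p.1}.image Prod.snd) (by
      simp only [Finset.mem_image, Finset.mem_filter]
      rintro _ ⟨p, ⟨hp, hpa⟩, rfl⟩ _ ⟨q, ⟨hq, haq⟩, rfl⟩
      exact (lt_iff_lt_of_cmp_eq_cmp (f.2.1 _ hp _ hq)).1 (hpa.trans haq)) (cα a)
  refine ⟨b, hb, fun p hp => ?_⟩
  rcases lt_or_gt_of_ne (fun hpa : p.1 = a => h ⟨p.2, hpa ▸ hp⟩) with hpa | hap
  · have hpb := hlo p.2 (Finset.mem_image_of_mem _ (Finset.mem_filter.2 ⟨hp, hpa⟩))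
    rw [(cmp_eq_lt_iff _ _).2 hpa, (cmp_eq_lt_iff _ _).2 hpb]
  · have hbp := hhi p.2 (Finset.mem_image_of_mem _ (Finset.mem_filter.2 ⟨hp, hap⟩))
    rw [(cmp_eq_gt_iff _ _).2 hap, (cmp_eq_gt_iff _ _).2 hbp]

lemma exists_le_mem_left [NoMinOrder β] [NoMaxOrder β] [Nonempty β]
    (hβ : ∀ i (a b : β), a < b → ∃ z, a < z ∧ z < b ∧ cβ z = i) (f : ColoredPartialIso cα cβ)
    (a : α) : ∃ g : ColoredPartialIso cα cβ, (∃ b, (a, b) ∈ g.1) ∧ f ≤ g := by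
  obtain ⟨b, hb, hcmp⟩ := f.exists_across hβ a
  refine ⟨⟨insert (a, b) f.1, ?_, ?_⟩, ⟨b, Finset.mem_insert_self _ _⟩, Finset.subset_insert _ _⟩
  · simp only [Finset.mem_insert]
    rintro p (rfl | hp) q (rfl | hq)
    · simp
    · rw [cmp_eq_cmp_symm, hcmp q hq, ← cmp_eq_cmp_symm]
    · exact hcmp p hp
    · exact f.2.1 p hp q hq
  · simp only [Finset.mem_insert]
    rintro p (rfl | hp)
    exacts [hb, f.2.2 p hp]

lemma exists_le_mem_right [NoMinOrder α] [NoMaxOrder α] [Nonempty α]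
    (hα : ∀ i (a b : α), a < b → ∃ z, a < z ∧ z < b ∧ cα z = i) (f : ColoredPartialIso cα cβ)
    (b : β) : ∃ g : ColoredPartialIso cα cβ, (∃ a, (a, b) ∈ g.1) ∧ f ≤ g := by
  obtain ⟨g, ⟨a, ha⟩, hfg⟩ := f.comm.exists_le_mem_left hα b
  refine ⟨g.comm, ⟨a, (mem_comm_iff g b a).2 ha⟩, fun p hp => ?_⟩
  exact (mem_comm_iff g p.2 p.1).2 (hfg ((mem_comm_iff f p.1 p.2).2 hp))

end ColoredPartialIso

theorem exists_orderIso_of_dense_colorings [Countable α] [NoMinOrder α] [NoMaxOrder α]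
    [Nonempty α] [Countable β] [NoMinOrder β] [NoMaxOrder β] [Nonempty β] {cα : α → κ}
    {cβ : β → κ} (hα : ∀ i (a b : α), a < b → ∃ z, a < z ∧ z < b ∧ cα z = i)
    (hβ : ∀ i (a b : β), a < b → ∃ z, a < z ∧ z < b ∧ cβ z = i) :
    ∃ e : α ≃o β, ∀ a, cβ (e a) = cα a := by
  have := Encodable.ofCountable α
  have := Encodable.ofCountable β
  let D : α ⊕ β → Order.Cofinal (ColoredPartialIso cα cβ) :=
    Sum.elim (fun a => ⟨{f | ∃ b, (a, b) ∈ f.1}, fun f => f.exists_le_mem_left hβ a⟩)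
      (fun b => ⟨{f | ∃ a, (a, b) ∈ f.1}, fun f => f.exists_le_mem_right hα b⟩)
  let I := Order.idealOfCofinals default D
  have hF (a : α) : ∃ b, ∃ f ∈ I, (a, b) ∈ f.1 := by
    obtain ⟨f, ⟨b, hb⟩, hfI⟩ := Order.cofinal_meets_idealOfCofinals default D (.inl a)
    exact ⟨b, f, hfI, hb⟩
  have hG (b : β) : ∃ a, ∃ f ∈ I, (a, b) ∈ f.1 := by
    obtain ⟨f, ⟨a, ha⟩, hfI⟩ := Order.cofinal_meets_idealOfCofinals default D (.inr b)
    exact ⟨a, f, hfI, ha⟩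
  choose F hF using hF
  choose G hG using hG
  refine ⟨OrderIso.ofCmpEqCmp F G fun a b => ?_, fun a => ?_⟩
  · obtain ⟨f, hf, ha⟩ := hF a
    obtain ⟨g, hg, hb⟩ := hG b
    obtain ⟨h, -, hfh, hgh⟩ := I.directed f hf g hg
    exact h.2.1 _ (hfh ha) _ (hgh hb)
  · obtain ⟨f, -, ha⟩ := hF a
    exact f.2.2 _ ha

end ColoredBackAndForth

lemma List.eq_or_exists_append_cons {α : Type*} :
    ∀ s t : List α, s = t ∨ (∃ a u, t = s ++ a :: u) ∨ (∃ a u, s = t ++ a :: u) ∨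
      ∃ w a b s' t', a ≠ b ∧ s = w ++ a :: s' ∧ t = w ++ b :: t'
  | [], [] => .inl rfl
  | [], a :: t => .inr (.inl ⟨a, t, rfl⟩)
  | a :: s, [] => .inr (.inr (.inl ⟨a, s, rfl⟩))
  | a :: s, b :: t => by
    obtain rfl | hab := eq_or_ne a b
    · rcases List.eq_or_exists_append_cons s t with rfl | ⟨c, u, rfl⟩ | ⟨c, u, rfl⟩ |
        ⟨w, c, d, s', t', hcd, rfl, rfl⟩
      exacts [.inl rfl, .inr (.inl ⟨c, u, rfl⟩), .inr (.inr (.inl ⟨c, u, rfl⟩)),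
        .inr (.inr (.inr ⟨a :: w, c, d, s', t', hcd, rfl, rfl⟩))]
    · exact .inr (.inr (.inr ⟨[], a, b, s, t, hab, rfl, rfl⟩))

lemma inlt_flatMap_block_iff {j k : ℕ} (hjk : j ≠ k) (w x y : List ℕ) :
    inlt ((w ++ j :: x).flatMap (block true)) ((w ++ k :: y).flatMap (block true)) ↔ j < k := by
  simp only [List.flatMap_append, List.flatMap_cons, inlt_append_left_iff]
  exact inlt_block_true_append_iff hjk _ _

lemma flatMap_block_injective : Function.Injective fun l : List ℕ => l.flatMap (block true) := by
  intro l
  induction l with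
  | nil =>
    rintro (_ | ⟨k, l'⟩) h
    · rfl
    · simp [block] at h
  | cons j l ih =>
    rintro (_ | ⟨k, l'⟩) h
    · simp [block] at h
    · simp only [List.flatMap_cons] at h
      obtain ⟨rfl, hl⟩ := block_true_append_inj h
      rw [ih hl]

namespace Shuffle

variable {n : ℕ}

abbrev Letter (n : ℕ) : Type := {v : ℕ // v ≤ 2 * n ∧ v ≠ n}

def Letter.color (a : Letter n) : Fin n :=
  if h : a.1 < n then ⟨a.1, h⟩ else ⟨a.1 - (n + 1), by omega⟩

def Letter.left (i : Fin n) : Letter n := ⟨i, by omega, by omega⟩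

def Letter.right (i : Fin n) : Letter n := ⟨n + 1 + i, by omega, by omega⟩

lemma Letter.color_left (i : Fin n) : (Letter.left i).color = i := by
  simp [Letter.color, Letter.left]

lemma Letter.color_right (i : Fin n) : (Letter.right i).color = i := by
  rw [Letter.color, dif_neg (by simp [Letter.right]; omega)]
  ext
  simp [Letter.right]

@[ext] structure Pos (n : ℕ) where
  letters : List (Letter n)

namespace Pos

def code (p : Pos n) : List Bool := (p.letters.map Subtype.val ++ [n]).flatMap (block true)

lemma code_injective : Function.Injective (code (n := n)) := by
  intro p q h
  have := List.append_cancel_right (flatMap_block_injective h)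
  exact Pos.ext (List.map_injective_iff.2 Subtype.val_injective this)

lemma code_nil : (⟨[]⟩ : Pos n).code = List.replicate n true ++ [false] := by
  simp [code, block]

lemma code_cons (a : Letter n) (s : List (Letter n)) :
    (⟨a :: s⟩ : Pos n).code = List.replicate a.1 true ++ false :: (⟨s⟩ : Pos n).code := by
  simp [code, block]

instance : LinearOrder (Pos n) :=
  LinearOrder.lift' (fun p => binVal p.code) (binVal_injective.comp code_injective)

lemma lt_iff_inlt {p q : Pos n} : p < q ↔ inlt p.code q.code := inlt_iff_binVal_lt.symm

instance : Countable (Pos n) := Function.Injective.countable fun _ _ => Pos.ext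

instance : Inhabited (Pos n) := ⟨⟨[]⟩⟩

lemma lt_append_cons_iff (s u : List (Letter n)) (a : Letter n) :
    (⟨s⟩ : Pos n) < ⟨s ++ a :: u⟩ ↔ n < a.1 := by
  simpa [lt_iff_inlt, code] using
    inlt_flatMap_block_iff a.2.2.symm (s.map Subtype.val) [] (u.map Subtype.val ++ [n])

lemma append_cons_lt_iff (s u : List (Letter n)) (a : Letter n) :
    (⟨s ++ a :: u⟩ : Pos n) < ⟨s⟩ ↔ a.1 < n := by
  simpa [lt_iff_inlt, code] using
    inlt_flatMap_block_iff a.2.2 (s.map Subtype.val) (u.map Subtype.val ++ [n]) []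

lemma append_cons_lt_append_cons_iff (w s t : List (Letter n)) {a b : Letter n} (hab : a ≠ b) :
    (⟨w ++ a :: s⟩ : Pos n) < ⟨w ++ b :: t⟩ ↔ a.1 < b.1 := by
  simpa [lt_iff_inlt, code] using
    inlt_flatMap_block_iff (Subtype.val_injective.ne hab) (w.map Subtype.val)
      (s.map Subtype.val ++ [n]) (t.map Subtype.val ++ [n])

lemma lt_append_right (s : List (Letter n)) (i : Fin n) :
    (⟨s⟩ : Pos n) < ⟨s ++ [Letter.right i]⟩ :=
  (lt_append_cons_iff _ _ _).2 (by simp [Letter.right]; omega)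

lemma append_left_lt (s : List (Letter n)) (i : Fin n) :
    (⟨s ++ [Letter.left i]⟩ : Pos n) < ⟨s⟩ :=
  (append_cons_lt_iff _ _ _).2 (by simp [Letter.left])

variable [NeZero n]

/-- The colour of the last letter; the empty sequence, a single extra point, gets colour `0`. -/
def color (p : Pos n) : Fin n := p.letters.foldl (fun _ a => a.color) 0

lemma color_append_singleton (s : List (Letter n)) (a : Letter n) :
    (⟨s ++ [a]⟩ : Pos n).color = a.color := by
  simp [color]

lemma color_append_left (s : List (Letter n)) (i : Fin n) :
    (⟨s ++ [Letter.left i]⟩ : Pos n).color = i := by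
  rw [color_append_singleton, Letter.color_left]

lemma color_append_right (s : List (Letter n)) (i : Fin n) :
    (⟨s ++ [Letter.right i]⟩ : Pos n).color = i := by
  rw [color_append_singleton, Letter.color_right]

instance : NoMaxOrder (Pos n) := ⟨fun p => ⟨_, lt_append_right p.letters 0⟩⟩

instance : NoMinOrder (Pos n) := ⟨fun p => ⟨_, append_left_lt p.letters 0⟩⟩

theorem exists_between_color (i : Fin n) (p q : Pos n) (hpq : p < q) :
    ∃ z, p < z ∧ z < q ∧ z.color = i := by
  obtain ⟨s⟩ := p
  obtain ⟨t⟩ := q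
  rcases List.eq_or_exists_append_cons s t with rfl | ⟨a, u, rfl⟩ | ⟨a, u, rfl⟩ |
    ⟨w, a, b, s', t', hab, rfl, rfl⟩
  · exact absurd hpq (lt_irrefl _)
  · refine ⟨⟨s ++ a :: u ++ [Letter.left i]⟩, ?_, append_left_lt _ i, color_append_left _ i⟩
    rw [List.append_assoc, List.cons_append, lt_append_cons_iff]
    exact (lt_append_cons_iff _ _ _).1 hpq
  · refine ⟨⟨t ++ a :: u ++ [Letter.right i]⟩, lt_append_right _ i, ?_, color_append_right _ i⟩
    rw [List.append_assoc, List.cons_append, append_cons_lt_iff]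
    exact (append_cons_lt_iff _ _ _).1 hpq
  · refine ⟨⟨w ++ a :: s' ++ [Letter.right i]⟩, lt_append_right _ i, ?_, color_append_right _ i⟩
    rw [List.append_assoc, List.cons_append, append_cons_lt_append_cons_iff _ _ _ hab]
    exact (append_cons_lt_append_cons_iff _ _ _ hab).1 hpq

end Pos

variable (n) [NeZero n]

/-- States: the colour of the last complete letter and the number of `1`s read since. The block
`1ⁿ0` ends the word, with an exit labelled by that colour. -/
def parser : Parser (Fin n) where
  State := Fin n × Fin (2 * n + 1)
  finState := inferInstance
  start := (0, ⟨0, by omega⟩)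
  step q b :=
    if b then
      if h : q.2.1 + 1 < 2 * n + 1 then some (.inl (q.1, ⟨q.2 + 1, h⟩)) else none
    else if h : q.2.1 = n then some (.inr q.1)
    else some (.inl (Letter.color ⟨q.2, by omega, h⟩, ⟨0, by omega⟩))

variable {n} {c : Fin n} {k : ℕ}

lemma parser_step_true (hk : k + 1 < 2 * n + 1) :
    (parser n).step (c, ⟨k, by omega⟩) true = some (.inl (c, ⟨k + 1, hk⟩)) := by
  simp [parser, hk]

lemma parser_step_true_of_eq (hk : k = 2 * n) :
    (parser n).step (c, ⟨k, by omega⟩) true = none := by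
  simp [parser, hk]

lemma parser_step_false_of_eq (hk : k = n) :
    (parser n).step (c, ⟨k, by omega⟩) false = some (.inr c) := by
  simp [parser, hk]

lemma parser_step_false_of_ne (hk : k ≤ 2 * n) (hkn : k ≠ n) :
    (parser n).step (c, ⟨k, by omega⟩) false =
      some (.inl (Letter.color ⟨k, hk, hkn⟩, ⟨0, by omega⟩)) := by
  simp [parser, hkn]

lemma parser_exitsAt_replicate_append (c : Fin n) (j k : ℕ) (h : k + j < 2 * n + 1)
    (w : List Bool) (i : Fin n) :
    (parser n).ExitsAt (c, ⟨k, by omega⟩) (List.replicate j true ++ w) i ↔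
      (parser n).ExitsAt (c, ⟨k + j, h⟩) w i := by
  induction j generalizing k with
  | zero => rfl
  | succ j ih =>
    rw [List.replicate_succ, List.cons_append,
      Parser.exitsAt_cons_of_step_inl (parser_step_true (by omega)), ih (k + 1) (by omega)]
    simp only [Nat.add_right_comm k 1 j, Nat.add_assoc]

lemma parser_exitsAt_code (s : List (Letter n)) (c : Fin n) :
    (parser n).ExitsAt (c, ⟨0, by omega⟩) (⟨s⟩ : Pos n).code
      (s.foldl (fun _ a => a.color) c) := by
  induction s generalizing c with
  | nil =>
    rw [Pos.code_nil, parser_exitsAt_replicate_append c n 0 (by omega),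
      Parser.exitsAt_cons_of_step_inr (parser_step_false_of_eq (by omega))]
    exact ⟨rfl, rfl⟩
  | cons a s ih =>
    rw [Pos.code_cons, parser_exitsAt_replicate_append c a 0 (by omega),
      Parser.exitsAt_cons_of_step_inl (parser_step_false_of_ne (by omega) (by omega))]
    simp only [Nat.zero_add]
    exact ih _

lemma exists_code_of_parser_exitsAt (u : List Bool) (c : Fin n) (k : ℕ) (hk : k ≤ 2 * n)
    (i : Fin n) (h : (parser n).ExitsAt (c, ⟨k, by omega⟩) u i) :
    ∃ s : List (Letter n), List.replicate k true ++ u = (⟨s⟩ : Pos n).code ∧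
      s.foldl (fun _ a => a.color) c = i := by
  induction u generalizing c k with
  | nil => exact h.elim
  | cons b u ih =>
    cases b with
    | true =>
      obtain hk' | rfl := hk.lt_or_eq
      · rw [Parser.exitsAt_cons_of_step_inl (parser_step_true (by omega))] at h
        obtain ⟨s, hs, hi⟩ := ih _ _ hk' h
        exact ⟨s, by rw [← hs, List.replicate_succ', List.append_assoc, List.singleton_append], hi⟩
      · exact absurd h (Parser.exitsAt_cons_of_step_none (parser_step_true_of_eq rfl))
    | false =>
      by_cases hkn : k = n
      · subst hkn
        obtain ⟨rfl, rfl⟩ :=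
          (Parser.exitsAt_cons_of_step_inr (parser_step_false_of_eq rfl)).1 h
        exact ⟨[], Pos.code_nil.symm, rfl⟩
      · rw [Parser.exitsAt_cons_of_step_inl (parser_step_false_of_ne hk hkn)] at h
        obtain ⟨s, hs, hi⟩ := ih _ 0 (by omega) h
        exact ⟨⟨k, hk, hkn⟩ :: s, by rw [Pos.code_cons, ← hs]; rfl, hi⟩

lemma parser_exit_iff (u : List Bool) (i : Fin n) :
    (parser n).Exit u i ↔ ∃ p : Pos n, p.code = u ∧ p.color = i := by
  constructor
  · intro h
    obtain ⟨s, hs, hi⟩ := exists_code_of_parser_exitsAt u 0 0 (by omega) i h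
    exact ⟨⟨s⟩, hs.symm, hi⟩
  · rintro ⟨⟨s⟩, rfl, rfl⟩
    exact parser_exitsAt_code s 0

end Shuffle

open Shuffle in
theorem isLinguage_shuffle {n : ℕ} (hn : 1 ≤ n) {L : Fin n → Type} {r : ∀ i, L i → L i → Prop}
    {χ : ℚ → Fin n} (hχ : ∀ i, ∀ a b : ℚ, a < b → ∃ q, a < q ∧ q < b ∧ χ q = i)
    (h : ∀ i, IsLinguage (r i)) : IsLinguage (Sigma.Lex (· < ·) fun q => r (χ q)) := by
  have : NeZero n := ⟨by omega⟩
  choose M e using h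
  obtain ⟨φ, hφ⟩ := exists_orderIso_of_dense_colorings hχ Pos.exists_between_color
  refine (parser n).isLinguage_sigmaLex M χ (fun q => (φ q).code) (fun u i => ?_)
    (Pos.code_injective.comp φ.injective) (fun a b => by rw [← Pos.lt_iff_inlt, φ.lt_iff_lt])
    fun q => (e (χ q)).some
  rw [parser_exit_iff]
  constructor
  · rintro ⟨p, rfl, rfl⟩
    exact ⟨φ.symm p, by rw [← hφ, φ.apply_symm_apply], by rw [φ.apply_symm_apply]⟩
  · rintro ⟨q, rfl, rfl⟩
    exact ⟨φ q, rfl, hφ q⟩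

/-- Every finite description linear order is order-isomorphic to
the linguage `𝐋(M)` of some deterministic finite automaton `M` over `{0,1}`. -/
theorem finDesc_isLinguage (L : Type) (r : L → L → Prop) (h : FinDesc L r) :
    ∃ M : PDFA Bool, Nonempty (r ≃r fun x y : M.lang => inlt x.1 y.1) := by
  change IsLinguage r
  induction h with
  | empty => exact isLinguage_empty
  | single => exact isLinguage_punit
  | iso _ _ _ _ _ e ih => exact ih.of_relIso e.some
  | sum _ _ _ _ _ _ ih₀ ih₁ => exact ih₀.sumLex ih₁
  | omegaMul _ _ _ ih => exact ih.omegaMul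
  | omegaStarMul _ _ _ ih => exact ih.omegaStarMul
  | shuffle _ hn _ _ _ hχ _ ih => exact isLinguage_shuffle hn hχ ih
end

section
/- If linear orders L₀ and L₁ are each order-isomorphic to the linguage of a deterministic finite automaton over {0,1}, then their binary sum L₀ + L₁ (the linear order obtained by placing a copy of L₁ after a copy of L₀) is also order-isomorphic to the linguage of a deterministic finite automaton over {0,1}. -/
/-- `(L, r)` is order-isomorphic to the linguage `(L(M), <₂)` of some
deterministic finite automaton `M` over `{0,1}`. -/
def IsLinguageOf (L : Type) (r : L → L → Prop) : Prop :=
  ∃ M : PDFA Bool, Nonempty (r ≃r fun x y : M.lang => inlt x.1 y.1)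

/-! The linguage of `L₀ + L₁` is realised by prefixing the words of `M₀` with `0` and those of
`M₁` with `1`: `<₂` compares these prefixes first, so every word of the first kind precedes every
word of the second, and within each kind the order is that of the original linguage. A fresh
start state whose `0`- and `1`-transitions lead into disjoint copies of `M₀` and `M₁` accepts
exactly these words. -/

lemma inlt_cons_cons_self (b : Bool) (x y : List Bool) :
    inlt (b :: x) (b :: y) ↔ inlt x y := by
  cases b <;> simp [inlt]

lemma inlt_false_true (x y : List Bool) : inlt (false :: x) (true :: y) := by
  simp [inlt]

lemma not_inlt_true_false (x y : List Bool) : ¬ inlt (true :: x) (false :: y) := by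
  simp [inlt]

def consSum (A B : Set (List Bool)) : Set (List Bool) :=
  List.cons false '' A ∪ List.cons true '' B

noncomputable def consSumRelIso (A B : Set (List Bool)) :
    Sum.Lex (fun x y : A => inlt x.1 y.1) (fun x y : B => inlt x.1 y.1) ≃r
      fun x y : consSum A B => inlt x.1 y.1 :=
  let F : A ⊕ B → consSum A B :=
    Sum.elim (fun x => ⟨false :: x.1, .inl ⟨x.1, x.2, rfl⟩⟩)
      (fun x => ⟨true :: x.1, .inr ⟨x.1, x.2, rfl⟩⟩)
  have hF : F.Bijective := by
    refine ⟨.sumElim (fun x y h => Subtype.ext (List.cons_injective (congrArg Subtype.val h)))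
      (fun x y h => Subtype.ext (List.cons_injective (congrArg Subtype.val h))) ?_, ?_⟩
    · intro x y h
      simpa using congrArg (List.head? ∘ Subtype.val) h
    · rintro ⟨_, ⟨x, hx, rfl⟩ | ⟨x, hx, rfl⟩⟩
      exacts [⟨.inl ⟨x, hx⟩, rfl⟩, ⟨.inr ⟨x, hx⟩, rfl⟩]
  { Equiv.ofBijective F hF with
    map_rel_iff' := by
      rintro (x | x) (y | y) <;>
        simp [F, inlt_cons_cons_self, inlt_false_true, not_inlt_true_false] }

namespace PDFA

variable {σ : Type}

lemma run_cons_s3 (M : PDFA σ) (q : M.State) (a : σ) (w : List σ) :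
    M.run q (a :: w) = M.step q a >>= fun q' => M.run q' w := rfl

lemma run_map {M N : PDFA σ} (f : M.State → N.State)
    (hf : ∀ q a, N.step (f q) a = (M.step q a).map f) (q : M.State) (w : List σ) :
    N.run (f q) w = (M.run q w).map f := by
  induction w generalizing q with
  | nil => rfl
  | cons a w ih =>
    rw [run_cons_s3, run_cons_s3, hf]
    cases M.step q a <;> simp [ih]

lemma mem_lang_iff_of_run_start_eq {M N : PDFA σ} (f : M.State → N.State)
    (hf : ∀ q, f q ∈ N.accept ↔ q ∈ M.accept) {w w' : List σ}
    (hw : N.run N.start w = (M.run M.start w').map f) :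
    w ∈ N.lang ↔ w' ∈ M.lang := by
  constructor
  · rintro ⟨_, hacc, hrun⟩
    rw [hw] at hrun
    obtain ⟨q, hq, rfl⟩ := Option.map_eq_some_iff.1 hrun
    exact ⟨q, (hf q).1 hacc, hq⟩
  · rintro ⟨q, hacc, hq⟩
    exact ⟨f q, (hf q).2 hacc, by rw [hw, hq]; rfl⟩

def sum (M₀ M₁ : PDFA Bool) : PDFA Bool where
  State := Option (M₀.State ⊕ M₁.State)
  finState := have := M₀.finState; have := M₁.finState; inferInstance
  start := none
  accept
    | none => False
    | some (.inl q) => q ∈ M₀.accept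
    | some (.inr q) => q ∈ M₁.accept
  step
    | none, b => some (some (if b then .inr M₁.start else .inl M₀.start))
    | some (.inl q), b => (M₀.step q b).map (some ∘ .inl)
    | some (.inr q), b => (M₁.step q b).map (some ∘ .inr)

variable (M₀ M₁ : PDFA Bool)

lemma nil_notMem_lang_sum : [] ∉ (M₀.sum M₁).lang := by
  rintro ⟨_, hacc, ⟨⟩⟩
  exact hacc

lemma cons_false_mem_lang_sum (w : List Bool) :
    false :: w ∈ (M₀.sum M₁).lang ↔ w ∈ M₀.lang :=
  mem_lang_iff_of_run_start_eq (N := M₀.sum M₁) (some ∘ .inl) (fun _ => Iff.rfl)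
    (run_map (N := M₀.sum M₁) (some ∘ .inl) (fun _ _ => rfl) M₀.start w)

lemma cons_true_mem_lang_sum (w : List Bool) :
    true :: w ∈ (M₀.sum M₁).lang ↔ w ∈ M₁.lang :=
  mem_lang_iff_of_run_start_eq (N := M₀.sum M₁) (some ∘ .inr) (fun _ => Iff.rfl)
    (run_map (N := M₀.sum M₁) (some ∘ .inr) (fun _ _ => rfl) M₁.start w)

lemma lang_sum : (M₀.sum M₁).lang = consSum M₀.lang M₁.lang := by
  ext w
  rcases w with _ | ⟨_ | _, w⟩
  · exact iff_of_false (nil_notMem_lang_sum M₀ M₁) (by simp [consSum])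
  · simp [cons_false_mem_lang_sum, consSum]
  · simp [cons_true_mem_lang_sum, consSum]

end PDFA

/-- If `L₀` and `L₁` are each order-isomorphic to the linguage of a
DFA over `{0,1}`, then so is their binary sum `L₀ + L₁` (a copy of `L₁` after a copy
of `L₀`). -/
theorem isLinguage_sum (L₀ L₁ : Type) (r₀ : L₀ → L₀ → Prop) (r₁ : L₁ → L₁ → Prop)
    (h₀ : IsLinguageOf L₀ r₀) (h₁ : IsLinguageOf L₁ r₁) :
    IsLinguageOf (L₀ ⊕ L₁) (Sum.Lex r₀ r₁) := by
  obtain ⟨M₀, ⟨e₀⟩⟩ := h₀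
  obtain ⟨M₁, ⟨e₁⟩⟩ := h₁
  refine ⟨M₀.sum M₁, ⟨?_⟩⟩
  rw [PDFA.lang_sum]
  exact (RelIso.sumLexCongr e₀ e₁).trans (consSumRelIso _ _)
end

section
/- Let M be a good deterministic finite automaton over {0,1} with start state q_s. Then the accepted language L(M) is infinite if and only if q_s is an ω̄-state. -/
/-- A DFA is good if every state is reachable from the start state and some accept
state is reachable from it. -/
def PDFA.Good {σ : Type} (M : PDFA σ) : Prop :=
  ∀ q : M.State, (∃ x, M.run M.start x = some q) ∧ (∃ y, ∃ f ∈ M.accept, M.run q y = some f)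

/-- `p` is an ω-state: `δ̂(p, x) = p` for some nonempty word `x`. -/
def PDFA.OmegaState (M : PDFA Bool) (p : M.State) : Prop :=
  ∃ x : List Bool, x ≠ [] ∧ M.run p x = some p

/-- `p` is an ω̄-state: some state reachable from `p` is an ω-state. -/
def PDFA.OmegaBarState (M : PDFA Bool) (p : M.State) : Prop :=
  ∃ x q, M.run p x = some q ∧ M.OmegaState q

namespace PDFA

lemma run_append {σ : Type} (M : PDFA σ) (q : M.State) (u v : List σ) :
    M.run q (u ++ v) = (M.run q u).bind (fun p => M.run p v) := by
  simp [run, List.foldlM_append, Option.bind_eq_bind]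

end PDFA

/-- For a good DFA `M` over `{0,1}` with start state `q_s`, the
accepted language `L(M)` is infinite if and only if `q_s` is an ω̄-state. -/

theorem lang_infinite_iff_omegaBar (M : PDFA Bool) (hM : M.Good) :
    M.lang.Infinite ↔ M.OmegaBarState M.start := by
  have := M.finState
  constructor
  · intro hinf
    set n := Nat.card M.State with hn
    obtain ⟨w, hw, hlen⟩ : ∃ w ∈ M.lang, n ≤ w.length := by
      by_contra h
      push_neg at h
      exact hinf (((List.finite_length_lt Bool n)).subset fun w hw => h w hw)
    obtain ⟨qf, hqf, hrun⟩ := hw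
    have hsome : ∀ i : Fin (n + 1), ∃ p, M.run M.start (w.take i) = some p := by
      intro i
      have hw' : w = w.take i ++ w.drop i := (List.take_append_drop i w).symm
      rw [hw', M.run_append] at hrun
      cases h : M.run M.start (w.take i) with
      | none => rw [h] at hrun; simp at hrun
      | some p => exact ⟨p, rfl⟩
    choose f hf using hsome
    obtain ⟨i, j, hij, hfij⟩ : ∃ i j : Fin (n + 1), i ≠ j ∧ f i = f j := by
      have : Fintype M.State := Fintype.ofFinite _
      have hc : Fintype.card M.State < Fintype.card (Fin (n + 1)) := by
        simp [hn, Nat.card_eq_fintype_card]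
      obtain ⟨i, j, hij, h⟩ := Fintype.exists_ne_map_eq_of_card_lt f hc
      exact ⟨i, j, hij, h⟩
    wlog hlt : (i : ℕ) < (j : ℕ) generalizing i j
    · exact this j i hij.symm hfij.symm (by omega)
    -- split w.take j into w.take i and middle
    have hjlen : (j : ℕ) ≤ w.length := le_trans (by omega) hlen
    set v : List Bool := (w.take j).drop i with hv
    have htt : (w.take (j : ℕ)).take (i : ℕ) = w.take (i : ℕ) := by
      rw [List.take_take]
      congr 1
      omega
    have hsplit : w.take (j : ℕ) = w.take (i : ℕ) ++ v := by
      conv_lhs => rw [← List.take_append_drop (i : ℕ) (w.take (j : ℕ))]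
      rw [htt]
    have hvlen : v.length = (j : ℕ) - i := by
      simp [hv, List.length_drop, List.length_take]
      omega
    have hvne : v ≠ [] := by
      intro h; rw [h] at hvlen; simp at hvlen; omega
    have h1 : M.run M.start (w.take (i : ℕ)) = some (f i) := hf i
    have h2 : M.run M.start (w.take (j : ℕ)) = some (f i) := hfij ▸ hf j
    rw [hsplit, M.run_append, h1] at h2
    exact ⟨w.take i, f i, h1, v, hvne, h2⟩
  · rintro ⟨x, q, hx, c, hc, hcyc⟩
    obtain ⟨y, g, hg, hy⟩ := (hM q).2
    have hcyc' : ∀ m : ℕ, M.run q (List.flatten (List.replicate m c)) = some q := by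
      intro m
      induction m with
      | zero => simp [PDFA.run]
      | succ k ih =>
        rw [List.replicate_succ, List.flatten_cons, M.run_append, hcyc]
        exact ih
    set W : ℕ → List Bool := fun m => x ++ List.flatten (List.replicate m c) ++ y with hW
    have hmem : ∀ m, W m ∈ M.lang := by
      intro m
      refine ⟨g, hg, ?_⟩
      rw [hW]
      simp only
      rw [M.run_append, M.run_append, hx, Option.bind_some, hcyc' m, Option.bind_some, hy]
    have hWlen : ∀ m, (W m).length = x.length + m * c.length + y.length := by
      intro m
      simp [hW, List.length_flatten, List.map_replicate, List.sum_replicate, smul_eq_mul,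
        Nat.mul_comm]
      omega
    have hinj : Function.Injective W := by
      intro a b hab
      have := congrArg List.length hab
      rw [hWlen a, hWlen b] at this
      have hc' : 0 < c.length := List.length_pos_iff.mpr hc
      have : a * c.length = b * c.length := by omega
      exact Nat.eq_of_mul_eq_mul_right hc' this
    exact Set.infinite_of_injective_forall_mem hinj hmem
end
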